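/- With the Bellman operator T of the single-elite problem, if v : {0,1} × [0,1] → ℝ is bounded and for each s, v(s,·) is weakly increasing on [0,1/2] and weakly decreasing on [1/2,1], then the same holds for (Tv)(s,·). Consequently the fixed-point value function V satisfies: V(s,·) is weakly increasing on [0,1/2], weakly decreasing on [1/2,1], and attains a maximum at p = 1/2. -/

import Mathlib

/-- Current-period return: `R 1 p' = H·𝟙{p' ≥ 1/2}`, `R 0 p' = H·𝟙{p' ≤ 1/2}`. -/
noncomputable def Rret (H : ℝ) : Bool → ℝ → ℝ
  | true, p' => if (1 : ℝ) / 2 ≤ p' then H else 0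
  | false, p' => if p' ≤ (1 : ℝ) / 2 then H else 0

/-- Bellman operator of the single-elite infinite-horizon problem. -/
noncomputable def Bell (c : ℝ → ℝ) (H β pr : ℝ) (v : Bool → ℝ → ℝ) (s : Bool) (p : ℝ) : ℝ :=
  sSup ((fun p' => Rret H s p' - c (p' - p) +
      β * (pr * v true p' + (1 - pr) * v false p')) '' Set.Icc (0 : ℝ) 1)

/-- STATEMENT 8 auxiliary lemmas. -/

private lemma cnonneg {c : ℝ → ℝ} (hc0 : c 0 = 0) (hceven : ∀ x, c (-x) = c x)
    (hm : MonotoneOn c (Set.Ici 0)) : ∀ x, 0 ≤ c x := by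
  intro x
  rcases le_total 0 x with h | h
  · have := hm Set.self_mem_Ici (Set.mem_Ici.2 h) h
    rwa [hc0] at this
  · have h' : (0:ℝ) ≤ -x := by linarith
    have := hm Set.self_mem_Ici (Set.mem_Ici.2 h') h'
    rwa [hc0, hceven] at this

private lemma sup_peak_mono {c g : ℝ → ℝ}
    (hceven : ∀ x, c (-x) = c x) (hm : MonotoneOn c (Set.Ici 0))
    (hg : MonotoneOn g (Set.Icc 0 (1/2)))
    (hbdd : ∀ r : ℝ, BddAbove ((fun p' => g p' - c (p' - r)) '' Set.Icc 0 1)) :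
    MonotoneOn (fun p => sSup ((fun p' => g p' - c (p' - p)) '' Set.Icc 0 1))
      (Set.Icc (0:ℝ) (1/2)) := by
  intro p hp q hq hpq
  apply csSup_le ((Set.nonempty_Icc.2 (by norm_num)).image _)
  rintro x ⟨p', hp', rfl⟩
  have hp'0 : (0:ℝ) ≤ p' := hp'.1
  have hp'1 : p' ≤ 1 := hp'.2
  set p'' := min (p' + (q - p)) (max p' (1/2)) with hp''def
  have h0 : (0:ℝ) ≤ p'' := le_min (by linarith) (le_max_of_le_left hp'0)
  have h1 : p'' ≤ 1 := min_le_of_right_le (max_le hp'1 (by norm_num))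
  have hgle : g p' ≤ g p'' := by
    rcases le_or_gt (1/2) p' with hhalf | hhalf
    · have he : p'' = p' := by
        rw [hp''def, max_eq_left hhalf, min_eq_right (by linarith)]
      rw [he]
    · have he : p'' = min (p' + (q - p)) (1/2) := by
        rw [hp''def, max_eq_right hhalf.le]
      have hle : p' ≤ p'' := by
        rw [he]; exact le_min (by linarith) hhalf.le
      have hub : p'' ≤ 1/2 := by rw [he]; exact min_le_right _ _
      exact hg ⟨hp'0, hhalf.le⟩ ⟨h0, hub⟩ hle
  have hcle : c (p'' - q) ≤ c (p' - p) := by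
    rcases le_total (p' + (q - p)) (max p' (1/2)) with hmin | hmin
    · have he : p'' = p' + (q - p) := min_eq_left hmin
      have : p'' - q = p' - p := by rw [he]; ring
      rw [this]
    · have he : p'' = max p' (1/2) := min_eq_right hmin
      rcases le_or_gt (1/2) p' with hh | hh
      · have he2 : p'' = p' := by rw [he, max_eq_left hh]
        rw [he2]
        have h1' : (0:ℝ) ≤ p' - q := by linarith [hq.2]
        exact hm (Set.mem_Ici.2 h1') (Set.mem_Ici.2 (by linarith)) (by linarith)
      · have he2 : p'' = 1/2 := by rw [he, max_eq_right hh.le]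
        rw [he2]
        have h1' : (0:ℝ) ≤ 1/2 - q := by linarith [hq.2]
        have h2' : 1/2 - q ≤ p' - p := by
          have := le_trans (le_max_right p' (1/2)) hmin; linarith
        exact hm (Set.mem_Ici.2 h1') (Set.mem_Ici.2 (by linarith)) h2'
  calc g p' - c (p' - p) ≤ g p'' - c (p'' - q) := sub_le_sub hgle hcle
    _ ≤ _ := le_csSup (hbdd q) ⟨p'', ⟨h0, h1⟩, rfl⟩

private lemma sup_peak_anti {c g : ℝ → ℝ}
    (hceven : ∀ x, c (-x) = c x) (hm : MonotoneOn c (Set.Ici 0))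
    (hg : AntitoneOn g (Set.Icc (1/2) 1))
    (hbdd : ∀ r : ℝ, BddAbove ((fun p' => g p' - c (p' - r)) '' Set.Icc 0 1)) :
    AntitoneOn (fun p => sSup ((fun p' => g p' - c (p' - p)) '' Set.Icc 0 1))
      (Set.Icc (1/2:ℝ) 1) := by
  intro p hp q hq hpq
  apply csSup_le ((Set.nonempty_Icc.2 (by norm_num)).image _)
  rintro x ⟨p', hp', rfl⟩
  have hp'0 : (0:ℝ) ≤ p' := hp'.1
  have hp'1 : p' ≤ 1 := hp'.2
  set p'' := max (p' - (q - p)) (min p' (1/2)) with hp''def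
  have h0 : (0:ℝ) ≤ p'' := le_max_of_le_right (le_min hp'0 (by norm_num))
  have h1 : p'' ≤ 1 := max_le (by linarith) (min_le_of_left_le hp'1)
  have hgle : g p' ≤ g p'' := by
    rcases le_or_gt p' (1/2) with hhalf | hhalf
    · have he : p'' = p' := by
        rw [hp''def, min_eq_left hhalf, max_eq_right (by linarith)]
      rw [he]
    · have he : p'' = max (p' - (q - p)) (1/2) := by
        rw [hp''def, min_eq_right hhalf.le]
      have hle : p'' ≤ p' := by
        rw [he]; exact max_le (by linarith) hhalf.le
      have hlb : 1/2 ≤ p'' := by rw [he]; exact le_max_right _ _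
      exact hg ⟨hlb, h1⟩ ⟨hhalf.le, hp'1⟩ hle
  have hcle : c (p'' - p) ≤ c (p' - q) := by
    rcases le_total (min p' (1/2)) (p' - (q - p)) with hmin | hmin
    · have he : p'' = p' - (q - p) := max_eq_left hmin
      have h2 : p'' - p = p' - q := by rw [he]; ring
      rw [h2]
    · have he : p'' = min p' (1/2) := max_eq_right hmin
      rcases le_or_gt p' (1/2) with hh | hh
      · have he2 : p'' = p' := by rw [he, min_eq_left hh]
        rw [he2]
        have e1 : c (p' - p) = c (p - p') := by rw [← hceven]; ring_nf
        have e2 : c (p' - q) = c (q - p') := by rw [← hceven]; ring_nf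
        rw [e1, e2]
        have h1' : (0:ℝ) ≤ p - p' := by linarith [hp.1]
        exact hm (Set.mem_Ici.2 h1') (Set.mem_Ici.2 (by linarith)) (by linarith)
      · have he2 : p'' = 1/2 := by rw [he, min_eq_right hh.le]
        rw [he2]
        have e1 : c (1/2 - p) = c (p - 1/2) := by rw [← hceven]; ring_nf
        have e2 : c (p' - q) = c (q - p') := by rw [← hceven]; ring_nf
        rw [e1, e2]
        have h2' : p - 1/2 ≤ q - p' := by
          have := le_trans hmin (min_le_right p' (1/2)); linarith
        have h1' : (0:ℝ) ≤ p - 1/2 := by linarith [hp.1]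
        exact hm (Set.mem_Ici.2 h1') (Set.mem_Ici.2 (by linarith)) h2'
  calc g p' - c (p' - q) ≤ g p'' - c (p'' - p) := sub_le_sub hgle hcle
    _ ≤ _ := le_csSup (hbdd p) ⟨p'', ⟨h0, h1⟩, rfl⟩

private lemma bell_eq (c : ℝ → ℝ) (H β pr : ℝ) (v : Bool → ℝ → ℝ) (s : Bool) (p : ℝ) :
    Bell c H β pr v s p =
      sSup ((fun p' => (Rret H s p' + β * (pr * v true p' + (1 - pr) * v false p'))
          - c (p' - p)) '' Set.Icc (0 : ℝ) 1) := by
  unfold Bell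
  congr 1
  apply congrArg (· '' Set.Icc (0:ℝ) 1)
  funext p'
  ring

private lemma rret_le (H : ℝ) (hH : 0 < H) (s : Bool) (p' : ℝ) :
    0 ≤ Rret H s p' ∧ Rret H s p' ≤ H := by
  cases s <;> simp only [Rret] <;> split_ifs <;> constructor <;> linarith

private lemma gfun_bdd {c : ℝ → ℝ} {H β pr M : ℝ} {v : Bool → ℝ → ℝ}
    (hcnn : ∀ x, 0 ≤ c x) (hH : 0 < H) (hβ : 0 ≤ β) (hpr0 : 0 ≤ pr) (hpr1 : pr ≤ 1)
    (hM : ∀ s, ∀ p ∈ Set.Icc (0:ℝ) 1, |v s p| ≤ M) (s : Bool) (r : ℝ) :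
    BddAbove ((fun p' => (Rret H s p' + β * (pr * v true p' + (1 - pr) * v false p'))
        - c (p' - r)) '' Set.Icc (0:ℝ) 1) := by
  refine ⟨H + β * M, ?_⟩
  rintro x ⟨p', hp', rfl⟩
  have hR := (rret_le H hH s p').2
  have hc' := hcnn (p' - r)
  have hvt : v true p' ≤ M := (abs_le.1 (hM true p' hp')).2
  have hvf : v false p' ≤ M := (abs_le.1 (hM false p' hp')).2
  have key : pr * v true p' + (1 - pr) * v false p' ≤ M := by nlinarith
  have key2 : β * (pr * v true p' + (1 - pr) * v false p') ≤ β * M :=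
    mul_le_mul_of_nonneg_left key hβ
  simp only
  linarith

private lemma bell_abs_bound {c : ℝ → ℝ} {H β pr M : ℝ} {v : Bool → ℝ → ℝ}
    (hc0 : c 0 = 0) (hcnn : ∀ x, 0 ≤ c x)
    (hH : 0 < H) (hβ : 0 ≤ β) (hpr0 : 0 ≤ pr) (hpr1 : pr ≤ 1)
    (hM : ∀ s, ∀ p ∈ Set.Icc (0:ℝ) 1, |v s p| ≤ M) (s : Bool) :
    ∀ p ∈ Set.Icc (0:ℝ) 1, |Bell c H β pr v s p| ≤ H + β * M := by
  intro p hpmem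
  rw [bell_eq, abs_le]
  constructor
  · -- lower bound via p' = p
    have hle := le_csSup (gfun_bdd hcnn hH hβ hpr0 hpr1 hM s p)
      (Set.mem_image_of_mem _ hpmem)
    have hR := (rret_le H hH s p).1
    have hc' : c (p - p) = 0 := by simpa using hc0
    have hvt : -M ≤ v true p := (abs_le.1 (hM true p hpmem)).1
    have hvf : -M ≤ v false p := (abs_le.1 (hM false p hpmem)).1
    have key : -M ≤ pr * v true p + (1 - pr) * v false p := by nlinarith
    have key2 : β * (-M) ≤ β * (pr * v true p + (1 - pr) * v false p) :=
      mul_le_mul_of_nonneg_left key hβ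
    rw [hc'] at hle
    linarith
  · apply csSup_le ((Set.nonempty_Icc.2 (by norm_num)).image _)
    rintro x ⟨p', hp', rfl⟩
    have hR := (rret_le H hH s p').2
    have hc' := hcnn (p' - p)
    have hvt : v true p' ≤ M := (abs_le.1 (hM true p' hp')).2
    have hvf : v false p' ≤ M := (abs_le.1 (hM false p' hp')).2
    have key : pr * v true p' + (1 - pr) * v false p' ≤ M := by nlinarith
    have key2 : β * (pr * v true p' + (1 - pr) * v false p') ≤ β * M :=
      mul_le_mul_of_nonneg_left key hβ
    simp only
    linarith

private lemma bell_le_of_le {c : ℝ → ℝ} {H β pr D M : ℝ} {v w : Bool → ℝ → ℝ}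
    (hcnn : ∀ x, 0 ≤ c x) (hH : 0 < H) (hβ : 0 ≤ β) (hpr0 : 0 ≤ pr) (hpr1 : pr ≤ 1)
    (hMw : ∀ s, ∀ p ∈ Set.Icc (0:ℝ) 1, |w s p| ≤ M)
    (hvw : ∀ s, ∀ p' ∈ Set.Icc (0:ℝ) 1, v s p' ≤ w s p' + D)
    (s : Bool) (p : ℝ) :
    Bell c H β pr v s p ≤ Bell c H β pr w s p + β * D := by
  rw [bell_eq, bell_eq]
  apply csSup_le ((Set.nonempty_Icc.2 (by norm_num)).image _)
  rintro x ⟨p', hp', rfl⟩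
  have h2 := hvw true p' hp'
  have h3 := hvw false p' hp'
  have step : (Rret H s p' + β * (pr * v true p' + (1 - pr) * v false p')) - c (p' - p)
      ≤ ((Rret H s p' + β * (pr * w true p' + (1 - pr) * w false p')) - c (p' - p)) + β * D := by
    nlinarith [mul_le_mul_of_nonneg_left h2 (mul_nonneg hβ hpr0),
      mul_le_mul_of_nonneg_left h3 (mul_nonneg hβ (by linarith : (0:ℝ) ≤ 1 - pr))]
  have hle := le_csSup (gfun_bdd hcnn hH hβ hpr0 hpr1 hMw s p)
    (⟨p', hp', rfl⟩ : _ ∈ (fun p' => (Rret H s p' + β * (pr * w true p' + (1 - pr) * w false p'))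
        - c (p' - p)) '' Set.Icc (0:ℝ) 1)
  simp only at step hle ⊢
  linarith

private lemma rret_mono (H : ℝ) (hH : 0 < H) (s : Bool) :
    MonotoneOn (Rret H s) (Set.Icc (0:ℝ) (1/2)) := by
  intro a ha b hb hab
  cases s <;> simp only [Rret] <;> split_ifs with h1 h2 <;>
    first
      | rfl
      | linarith [ha.2, hb.2]

private lemma rret_anti (H : ℝ) (hH : 0 < H) (s : Bool) :
    AntitoneOn (Rret H s) (Set.Icc (1/2:ℝ) 1) := by
  intro a ha b hb hab
  cases s <;> simp only [Rret] <;> split_ifs with h1 h2 <;>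
    first
      | rfl
      | linarith [ha.1, hb.1]

private lemma gfun_mono {β pr H : ℝ} {v : Bool → ℝ → ℝ}
    (hH : 0 < H) (hβ : 0 ≤ β) (hpr0 : 0 ≤ pr) (hpr1 : pr ≤ 1)
    (hvt : MonotoneOn (v true) (Set.Icc (0:ℝ) (1/2)))
    (hvf : MonotoneOn (v false) (Set.Icc (0:ℝ) (1/2))) (s : Bool) :
    MonotoneOn (fun p' => Rret H s p' + β * (pr * v true p' + (1 - pr) * v false p'))
      (Set.Icc (0:ℝ) (1/2)) := by
  intro a ha b hb hab
  have h1 := rret_mono H hH s ha hb hab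
  have h2 := hvt ha hb hab
  have h3 := hvf ha hb hab
  simp only
  nlinarith [mul_le_mul_of_nonneg_left h2 (mul_nonneg hβ hpr0),
    mul_le_mul_of_nonneg_left h3 (mul_nonneg hβ (by linarith : (0:ℝ) ≤ 1 - pr))]

private lemma gfun_anti {β pr H : ℝ} {v : Bool → ℝ → ℝ}
    (hH : 0 < H) (hβ : 0 ≤ β) (hpr0 : 0 ≤ pr) (hpr1 : pr ≤ 1)
    (hvt : AntitoneOn (v true) (Set.Icc (1/2:ℝ) 1))
    (hvf : AntitoneOn (v false) (Set.Icc (1/2:ℝ) 1)) (s : Bool) :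
    AntitoneOn (fun p' => Rret H s p' + β * (pr * v true p' + (1 - pr) * v false p'))
      (Set.Icc (1/2:ℝ) 1) := by
  intro a ha b hb hab
  have h1 := rret_anti H hH s ha hb hab
  have h2 := hvt ha hb hab
  have h3 := hvf ha hb hab
  simp only
  nlinarith [mul_le_mul_of_nonneg_left h2 (mul_nonneg hβ hpr0),
    mul_le_mul_of_nonneg_left h3 (mul_nonneg hβ (by linarith : (0:ℝ) ≤ 1 - pr))]

/-- The Bellman operator preserves the peak property at `1/2`, and any bounded
fixed point `V` has the peak property and attains a maximum at `p = 1/2`. -/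
theorem bellman_preserves_peak
    (c : ℝ → ℝ) (H β pr : ℝ)
    (hc0 : c 0 = 0)
    (hceven : ∀ x, c (-x) = c x)
    (hcmono : StrictMonoOn c (Set.Ici (0 : ℝ)))
    (hcconv : StrictConvexOn ℝ Set.univ c)
    (hccont : Continuous c)
    (hH : 0 < H) (hβ : β ∈ Set.Ioo (0 : ℝ) 1) (hpr : pr ∈ Set.Ioo (0 : ℝ) 1) :
    (∀ v : Bool → ℝ → ℝ,
        (∃ M, ∀ s, ∀ p ∈ Set.Icc (0 : ℝ) 1, |v s p| ≤ M) →
        (∀ s, MonotoneOn (v s) (Set.Icc (0 : ℝ) (1 / 2)) ∧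
              AntitoneOn (v s) (Set.Icc (1 / 2 : ℝ) 1)) →
        ∀ s, MonotoneOn (Bell c H β pr v s) (Set.Icc (0 : ℝ) (1 / 2)) ∧
             AntitoneOn (Bell c H β pr v s) (Set.Icc (1 / 2 : ℝ) 1)) ∧
    (∀ V : Bool → ℝ → ℝ,
        (∃ M, ∀ s, ∀ p ∈ Set.Icc (0 : ℝ) 1, |V s p| ≤ M) →
        (∀ s, ∀ p ∈ Set.Icc (0 : ℝ) 1, V s p = Bell c H β pr V s p) →
        ∀ s, MonotoneOn (V s) (Set.Icc (0 : ℝ) (1 / 2)) ∧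
             AntitoneOn (V s) (Set.Icc (1 / 2 : ℝ) 1) ∧
             IsMaxOn (V s) (Set.Icc (0 : ℝ) 1) (1 / 2)) := by
  have hcm : MonotoneOn c (Set.Ici 0) := hcmono.monotoneOn
  have hcnn : ∀ x, 0 ≤ c x := cnonneg hc0 hceven hcm
  have hβ0 : (0:ℝ) ≤ β := hβ.1.le
  have hpr0 : (0:ℝ) ≤ pr := hpr.1.le
  have hpr1 : pr ≤ 1 := hpr.2.le
  have part1 : ∀ v : Bool → ℝ → ℝ,
      (∃ M, ∀ s, ∀ p ∈ Set.Icc (0 : ℝ) 1, |v s p| ≤ M) →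
      (∀ s, MonotoneOn (v s) (Set.Icc (0 : ℝ) (1 / 2)) ∧
            AntitoneOn (v s) (Set.Icc (1 / 2 : ℝ) 1)) →
      ∀ s, MonotoneOn (Bell c H β pr v s) (Set.Icc (0 : ℝ) (1 / 2)) ∧
           AntitoneOn (Bell c H β pr v s) (Set.Icc (1 / 2 : ℝ) 1) := by
    rintro v ⟨M, hM⟩ hpk s
    constructor
    · have hmn := sup_peak_mono hceven hcm
        (gfun_mono hH hβ0 hpr0 hpr1 (hpk true).1 (hpk false).1 s)
        (fun r => gfun_bdd hcnn hH hβ0 hpr0 hpr1 hM s r)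
      intro p hp q hq hpq
      rw [bell_eq, bell_eq]
      exact hmn hp hq hpq
    · have hmn := sup_peak_anti hceven hcm
        (gfun_anti hH hβ0 hpr0 hpr1 (hpk true).2 (hpk false).2 s)
        (fun r => gfun_bdd hcnn hH hβ0 hpr0 hpr1 hM s r)
      intro p hp q hq hpq
      rw [bell_eq, bell_eq]
      exact hmn hp hq hpq
  refine ⟨part1, ?_⟩
  rintro V ⟨M, hMV⟩ hfix s
  set F : (Bool → ℝ → ℝ) → (Bool → ℝ → ℝ) := Bell c H β pr with hF
  set vs : ℕ → Bool → ℝ → ℝ := fun n => F^[n] (fun _ _ => 0) with hvs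
  have hvs_succ : ∀ n, vs (n+1) = F (vs n) := fun n => Function.iterate_succ_apply' F n _
  have hbnd : ∀ n, ∃ K, ∀ s', ∀ p ∈ Set.Icc (0:ℝ) 1, |vs n s' p| ≤ K := by
    intro n
    induction n with
    | zero =>
      refine ⟨0, fun s' p _ => ?_⟩
      simp [hvs]
    | succ n ih =>
      obtain ⟨K, hK⟩ := ih
      refine ⟨H + β * K, fun s' p hpmem => ?_⟩
      rw [hvs_succ]
      exact bell_abs_bound hc0 hcnn hH hβ0 hpr0 hpr1 hK s' p hpmem
  have hpeak : ∀ n, ∀ s', MonotoneOn (vs n s') (Set.Icc (0:ℝ) (1/2)) ∧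
      AntitoneOn (vs n s') (Set.Icc (1/2:ℝ) 1) := by
    intro n
    induction n with
    | zero =>
      intro s'
      constructor
      · intro a _ b _ _; simp [hvs]
      · intro a _ b _ _; simp [hvs]
    | succ n ih =>
      intro s'
      rw [hvs_succ]
      exact part1 (vs n) (hbnd n) ih s'
  have hdist : ∀ n, ∀ s', ∀ p ∈ Set.Icc (0:ℝ) 1, |vs n s' p - V s' p| ≤ β^n * M := by
    intro n
    induction n with
    | zero =>
      intro s' p hpmem
      have : vs 0 s' p = 0 := by simp [hvs]
      rw [this, pow_zero, one_mul, zero_sub, abs_neg]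
      exact hMV s' p hpmem
    | succ n ih =>
      intro s' p hpmem
      obtain ⟨K, hK⟩ := hbnd n
      have hub : ∀ s'', ∀ p'' ∈ Set.Icc (0:ℝ) 1, vs n s'' p'' ≤ V s'' p'' + β^n * M := by
        intro s'' p'' h''
        have := (abs_le.1 (ih s'' p'' h'')).2
        linarith
      have hlb : ∀ s'', ∀ p'' ∈ Set.Icc (0:ℝ) 1, V s'' p'' ≤ vs n s'' p'' + β^n * M := by
        intro s'' p'' h''
        have := (abs_le.1 (ih s'' p'' h'')).1
        linarith
      have h1 := bell_le_of_le hcnn hH hβ0 hpr0 hpr1 hMV hub s' p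
      have h2 := bell_le_of_le hcnn hH hβ0 hpr0 hpr1 hK hlb s' p
      rw [hvs_succ]
      have hfx : V s' p = Bell c H β pr V s' p := hfix s' p hpmem
      have he : β^(n+1) * M = β * (β^n * M) := by rw [pow_succ]; ring
      rw [abs_le]
      constructor
      · have : Bell c H β pr V s' p ≤ Bell c H β pr (vs n) s' p + β * (β^n * M) := h2
        rw [← hfx] at this
        show -(β^(n+1) * M) ≤ F (vs n) s' p - V s' p
        have hFe : F (vs n) s' p = Bell c H β pr (vs n) s' p := rfl
        rw [hFe, he]
        linarith
      · have : Bell c H β pr (vs n) s' p ≤ Bell c H β pr V s' p + β * (β^n * M) := h1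
        rw [← hfx] at this
        show F (vs n) s' p - V s' p ≤ β^(n+1) * M
        have hFe : F (vs n) s' p = Bell c H β pr (vs n) s' p := rfl
        rw [hFe, he]
        linarith
  have hlim : ∀ a b : ℝ, (∀ n : ℕ, a ≤ b + 2*(β^n*M)) → a ≤ b := by
    intro a b h
    have hβpow : Filter.Tendsto (fun n : ℕ => β ^ n) Filter.atTop (nhds 0) :=
      tendsto_pow_atTop_nhds_zero_of_lt_one hβ0 hβ.2
    have h2 : Filter.Tendsto (fun n : ℕ => b + 2*(β^n*M)) Filter.atTop (nhds (b + 2*(0*M))) :=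
      Filter.Tendsto.const_add _ (Filter.Tendsto.const_mul _ (hβpow.mul_const M))
    have h3 : Filter.Tendsto (fun n : ℕ => b + 2*(β^n*M)) Filter.atTop (nhds b) := by
      simpa using h2
    exact ge_of_tendsto' h3 h
  have hsub : ∀ {x : ℝ}, x ∈ Set.Icc (0:ℝ) (1/2) → x ∈ Set.Icc (0:ℝ) 1 :=
    fun hx => ⟨hx.1, le_trans hx.2 (by norm_num)⟩
  have hsub2 : ∀ {x : ℝ}, x ∈ Set.Icc (1/2:ℝ) 1 → x ∈ Set.Icc (0:ℝ) 1 :=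
    fun hx => ⟨le_trans (by norm_num) hx.1, hx.2⟩
  have hmono : MonotoneOn (V s) (Set.Icc (0:ℝ) (1/2)) := by
    intro p hp q hq hpq
    apply hlim
    intro n
    have d1 := abs_le.1 (hdist n s p (hsub hp))
    have d2 := abs_le.1 (hdist n s q (hsub hq))
    have m := (hpeak n s).1 hp hq hpq
    have := d1.1
    have := d2.2
    linarith
  have hanti : AntitoneOn (V s) (Set.Icc (1/2:ℝ) 1) := by
    intro p hp q hq hpq
    apply hlim
    intro n
    have d1 := abs_le.1 (hdist n s p (hsub2 hp))
    have d2 := abs_le.1 (hdist n s q (hsub2 hq))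
    have m := (hpeak n s).2 hp hq hpq
    linarith [d1.2, d2.1]
  refine ⟨hmono, hanti, ?_⟩
  rw [isMaxOn_iff]
  intro x hx
  rcases le_total x (1/2) with h | h
  · exact hmono ⟨hx.1, h⟩ ⟨by norm_num, le_refl _⟩ h
  · exact hanti ⟨le_refl _, by norm_num⟩ ⟨h, hx.2⟩ h
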